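/- If ν is strictly dominant, then for every N ∈ ℤ one has f_ν(U_N) = U_N, and the restriction of f_ν to U_N is a bijection from U_N onto U_N. -/

import Mathlib

noncomputable section

open Matrix

/-- The ε-adic valuation on `L = k̄((ε))`, with `val 0 = ∞`. -/
def val {K : Type*} [Field K] (x : LaurentSeries K) : WithTop ℤ := x.orderTop

/-- The uniformizer ε of the Laurent series field. -/
def eps (K : Type*) [Field K] : LaurentSeries K := HahnSeries.single 1 1

/-- `σ : L → L` is the Frobenius automorphism: it fixes ε and raises each Laurent-series
coefficient to the `q`-th power.  (This property determines `σ` uniquely.) -/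
def IsFrobenius (K : Type*) [Field K] (q : ℕ)
    (σ : LaurentSeries K → LaurentSeries K) : Prop :=
  ∀ (x : LaurentSeries K) (n : ℤ), (σ x).coeff n = (x.coeff n) ^ q

/-- Upper unitriangular matrix: an element of `U_1`. -/
def Unitri {K : Type*} [Field K] {n : ℕ}
    (g : Matrix (Fin n) (Fin n) (LaurentSeries K)) : Prop :=
  (∀ i, g i i = 1) ∧ (∀ i j : Fin n, j < i → g i j = 0)

/-- `ν = (ν_1, …, ν_n)` is strictly dominant: `ν_1 > ν_2 > … > ν_n`. -/
def StrictDominant {n : ℕ} (ν : Fin n → ℤ) : Prop :=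
  ∀ p q : Fin n, p < q → ν q < ν p

/-- The diagonal matrix `ε^ν = diag(ε^{ν_1}, …, ε^{ν_n})`. -/
def epsDiag (K : Type*) [Field K] {n : ℕ} (ν : Fin n → ℤ) :
    Matrix (Fin n) (Fin n) (LaurentSeries K) :=
  Matrix.diagonal fun i => eps K ^ (ν i)

/-- The map `f_ν : U_1 → U_1`, `f_ν(h) = h⁻¹ · ε^ν · σ(h) · ε^{−ν}`. -/
def fnu {K : Type*} [Field K] {n : ℕ} (σ : LaurentSeries K → LaurentSeries K)
    (ν : Fin n → ℤ) (g : Matrix (Fin n) (Fin n) (LaurentSeries K)) :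
    Matrix (Fin n) (Fin n) (LaurentSeries K) :=
  g⁻¹ * epsDiag K ν * g.map σ * epsDiag K (fun i => -ν i)

/-- The subgroup `U(o_L)` of `U_1`: unitriangular matrices with entries in `o_L`. -/
def UO (K : Type*) [Field K] (n : ℕ) :
    Set (Matrix (Fin n) (Fin n) (LaurentSeries K)) :=
  {g | Unitri g ∧ ∀ p q : Fin n, 0 ≤ val (g p q)}

/-- `U_N = {g ∈ U_1 : val(g_{pq}) ≥ (q−p)·N for all p < q}`
(equivalently `ε^{−μ}·U(o_L)·ε^{μ}` for `μ = (N, 2N, …, nN)`). -/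
def UN (K : Type*) [Field K] (n : ℕ) (N : ℤ) :
    Set (Matrix (Fin n) (Fin n) (LaurentSeries K)) :=
  {g | Unitri g ∧ ∀ p q : Fin n, p < q →
    ((((q : ℤ) - (p : ℤ)) * N : ℤ) : WithTop ℤ) ≤ val (g p q)}

/-- `U_{m,N} = {g ∈ U_1 : val(g_{pq}) ≥ (q−p)·N + m for all p < q}`. -/
def UmN (K : Type*) [Field K] (n : ℕ) (m N : ℤ) :
    Set (Matrix (Fin n) (Fin n) (LaurentSeries K)) :=
  {g | Unitri g ∧ ∀ p q : Fin n, p < q →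
    ((((q : ℤ) - (p : ℤ)) * N + m : ℤ) : WithTop ℤ) ≤ val (g p q)}

/-!
Write `A(h) = ε^ν σ(h) ε^{-ν}` (`twist σ ν h`), so that `f_ν(h) = g` means `h g = A(h)`.
For unitriangular `g`, row `p` of this equation is the triangular system
`h_{pr} + ∑_{s<r} h_{ps} g_{sr} = ε^{ν_p - ν_r} σ(h_{pr})` (`p < r`), and since `ν_p - ν_r > 0`
each twisted equation `x + c = ε^d σ(x)` has exactly one solution, computed coefficientwise by
`x_m = x_{m-d}^q - c_m`; it satisfies `val x ≥ val c`. Solving the rows column by column shows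
that `f_ν` is injective on `U_1` and that the preimage of `g ∈ U_N` lies in `U_N`. Finally `f_ν`
maps `U_N` into itself because `U_N` is the unitriangular part of the ring
`ε^{-μ} M_n(o_L) ε^{μ}`, which contains `A(h)` and `h⁻¹ = ∑_{i<n} (1 - h)^i`.
-/

open HahnSeries

section

variable {K : Type*} [Field K] {q : ℕ} {σ : LaurentSeries K → LaurentSeries K}

theorem val_mul (x y : LaurentSeries K) : val (x * y) = val x + val y :=
  orderTop_mul x y

theorem le_val_mul {a b : ℤ} {x y : LaurentSeries K} (hx : (a : WithTop ℤ) ≤ val x)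
    (hy : (b : WithTop ℤ) ≤ val y) : ((a + b : ℤ) : WithTop ℤ) ≤ val (x * y) := by
  rw [val_mul, WithTop.coe_add]
  exact add_le_add hx hy

theorem le_val_add {C : WithTop ℤ} {x y : LaurentSeries K} (hx : C ≤ val x) (hy : C ≤ val y) :
    C ≤ val (x + y) :=
  (le_min hx hy).trans min_orderTop_le_orderTop_add

theorem le_val_sum {ι : Type*} {s : Finset ι} {f : ι → LaurentSeries K} {C : WithTop ℤ}
    (h : ∀ i ∈ s, C ≤ val (f i)) : C ≤ val (∑ i ∈ s, f i) := by
  simp only [val, le_orderTop_iff_forall] at h ⊢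
  intro j hj
  rw [coeff_sum]
  exact Finset.sum_eq_zero fun i hi => h i hi j hj

theorem val_single_one_mul (d : ℤ) (x : LaurentSeries K) :
    val (single d (1 : K) * x) = d + val x := by
  rw [val_mul, val, orderTop_single one_ne_zero]

theorem eps_zpow (d : ℤ) : eps K ^ d = single d 1 :=
  (RatFunc.single_zpow d).symm

namespace IsFrobenius

/-- For `q = 0` every coefficient of `σ 0` would be `1`, including those below its order. -/
theorem ne_zero (hσ : IsFrobenius K q σ) : q ≠ 0 := by
  rintro rfl
  have h := coeff_eq_zero_of_lt_order (sub_one_lt (σ 0).order)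
  rw [hσ, pow_zero] at h
  exact one_ne_zero h

theorem map_zero (hσ : IsFrobenius K q σ) : σ 0 = 0 := by
  ext m
  rw [hσ]
  simp [hσ.ne_zero]

theorem map_one (hσ : IsFrobenius K q σ) : σ 1 = 1 := by
  ext m
  rw [hσ, coeff_one]
  split_ifs <;> simp [hσ.ne_zero]

theorem val_eq (hσ : IsFrobenius K q σ) (x : LaurentSeries K) : val (σ x) = val x :=
  eq_of_forall_le_iff fun i => by
    simp only [val, le_orderTop_iff_forall, hσ x, pow_eq_zero_iff hσ.ne_zero]

end IsFrobenius

section TwistedEquation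

variable {d : ℤ} {x y c : LaurentSeries K}

theorem twisted_eq_iff_coeff (hσ : IsFrobenius K q σ) :
    x + c = single d 1 * σ x ↔ ∀ m, x.coeff m + c.coeff m = x.coeff (m - d) ^ q := by
  simp only [HahnSeries.ext_iff, funext_iff, coeff_add, coeff_single_mul, one_mul, hσ x]

/-- At the lowest coefficient where `x` and `y` would differ, the equation expresses both through
a strictly lower coefficient, where they agree. -/
theorem twisted_eq_unique (hσ : IsFrobenius K q σ) (hd : 0 < d)
    (hx : x + c = single d 1 * σ x) (hy : y + c = single d 1 * σ y) : x = y := by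
  rw [twisted_eq_iff_coeff hσ] at hx hy
  by_contra hne
  set m := (x - y).order
  have hlow : (x - y).coeff (m - d) = 0 := coeff_eq_zero_of_lt_order (by omega)
  rw [coeff_sub, sub_eq_zero] at hlow
  apply mt coeff_order_eq_zero.1 (sub_ne_zero.2 hne)
  rw [coeff_sub, sub_eq_zero, ← add_left_inj (c.coeff m), hx, hy, hlow]

theorem val_le_of_twisted_eq (hσ : IsFrobenius K q σ) (hd : 0 < d)
    (hx : x + c = single d 1 * σ x) : val c ≤ val x := by
  rw [twisted_eq_iff_coeff hσ] at hx
  by_contra! hlt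
  have hx0 : x ≠ 0 := by rintro rfl; simp [val] at hlt
  apply mt coeff_order_eq_zero.1 hx0
  have hc : c.coeff x.order = 0 := coeff_eq_zero_of_lt_orderTop <| by
    rwa [order_eq_orderTop_of_ne_zero hx0]
  have hprev : x.coeff (x.order - d) = 0 := coeff_eq_zero_of_lt_order (by omega)
  simpa [hc, hprev, hσ.ne_zero] using hx x.order

/-- `x_m = x_{m-d}^q - c_m`, and `x_m = 0` below the order of `c`: the solution of
`x + c = ε^d σ(x)` when `0 < d` (for `d ≤ 0` the junk value `0`). -/
def twistedCoeff (q : ℕ) (d : ℤ) (c : LaurentSeries K) (m : ℤ) : K :=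
  if _ : c.order ≤ m ∧ 0 < d then twistedCoeff q d c (m - d) ^ q - c.coeff m else 0
termination_by (m - c.order + 1).toNat
decreasing_by omega

theorem twistedCoeff_eq_zero_of_lt {m : ℤ} (hm : m < c.order) : twistedCoeff q d c m = 0 := by
  rw [twistedCoeff, dif_neg (by omega)]

def twistedSolve (q : ℕ) (d : ℤ) (c : LaurentSeries K) : LaurentSeries K :=
  ofSuppBddBelow (twistedCoeff q d c) <| bddBelow_def.2 ⟨c.order, fun m hm => by
    by_contra! h
    exact hm (twistedCoeff_eq_zero_of_lt h)⟩

theorem coeff_twistedSolve (q : ℕ) (d : ℤ) (c : LaurentSeries K) :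
    (twistedSolve q d c).coeff = twistedCoeff q d c :=
  rfl

theorem twistedSolve_spec (hσ : IsFrobenius K q σ) (hd : 0 < d) (c : LaurentSeries K) :
    twistedSolve q d c + c = single d 1 * σ (twistedSolve q d c) := by
  rw [twisted_eq_iff_coeff hσ]
  intro m
  rw [coeff_twistedSolve]
  by_cases hm : c.order ≤ m
  · rw [twistedCoeff, dif_pos ⟨hm, hd⟩, sub_add_cancel]
  · rw [twistedCoeff_eq_zero_of_lt (by omega), twistedCoeff_eq_zero_of_lt (by omega),
      coeff_eq_zero_of_lt_order (by omega), zero_pow hσ.ne_zero, add_zero]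

end TwistedEquation

variable {n : ℕ} {ν : Fin n → ℤ} {N : ℤ} {g h : Matrix (Fin n) (Fin n) (LaurentSeries K)}

theorem mul_unitri_apply (hg : Unitri g) (p r : Fin n) :
    (h * g) p r = h p r + ∑ s ∈ Finset.Iio r, h p s * g s r := by
  have hvanish : ∀ s ∈ Finset.univ, s ∉ Finset.Iic r → h p s * g s r = 0 := fun s _ hs => by
    rw [hg.2 s r (not_le.1 (by simpa using hs)), mul_zero]
  rw [mul_apply, ← Finset.sum_subset (Finset.subset_univ _) hvanish, Finset.Iic_eq_cons_Iio,
    Finset.sum_cons, hg.1, mul_one]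

theorem Unitri.mul (hh : Unitri h) (hg : Unitri g) : Unitri (h * g) := by
  refine ⟨fun p => ?_, fun i j hji => ?_⟩
  · rw [mul_unitri_apply hg, hh.1, add_eq_left]
    exact Finset.sum_eq_zero fun s hs => by rw [hh.2 p s (Finset.mem_Iio.1 hs), zero_mul]
  · rw [mul_unitri_apply hg, hh.2 i j hji, zero_add]
    exact Finset.sum_eq_zero fun s hs => by
      rw [hh.2 i s ((Finset.mem_Iio.1 hs).trans hji), zero_mul]

/-- Cayley–Hamilton: the characteristic polynomial of `h` is `(X - 1)^n`. -/
theorem Unitri.one_sub_pow_eq_zero (hh : Unitri h) : (1 - h) ^ n = 0 := by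
  have hchar : h.charpoly = (Polynomial.X - 1) ^ n := by
    rw [charpoly_of_isUpperTriangular h fun i j hij => hh.2 i j hij]
    simp [hh.1]
  have hnil : (h - 1) ^ n = 0 := by
    simpa [hchar] using aeval_self_charpoly h
  rw [← neg_sub, neg_pow, hnil, mul_zero]

theorem Unitri.mul_geom_sum (hh : Unitri h) : h * ∑ i ∈ Finset.range n, (1 - h) ^ i = 1 := by
  simpa [hh.one_sub_pow_eq_zero] using mul_neg_geom_sum (1 - h) n

theorem Unitri.inv_mem {S : Subring (Matrix (Fin n) (Fin n) (LaurentSeries K))} (hh : Unitri h)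
    (hS : h ∈ S) : h⁻¹ ∈ S := by
  rw [inv_eq_right_inv hh.mul_geom_sum]
  exact S.sum_mem fun i _ => S.pow_mem (S.sub_mem S.one_mem hS) i

theorem Unitri.mul_inv (hh : Unitri h) : h * h⁻¹ = 1 := by
  rw [inv_eq_right_inv hh.mul_geom_sum]
  exact hh.mul_geom_sum

theorem Unitri.inv_mul (hh : Unitri h) : h⁻¹ * h = 1 :=
  mul_eq_one_comm.1 hh.mul_inv

theorem Unitri.inv (hh : Unitri h) : Unitri h⁻¹ := by
  have hupper : h⁻¹.IsUpperTriangular :=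
    hh.inv_mem (S := (blockTriangularSubalgebra ℤ (LaurentSeries K) (id : Fin n → Fin n)).toSubring)
      (show h.IsUpperTriangular from fun i j hij => hh.2 i j hij)
  refine ⟨fun p => ?_, fun i j hji => hupper hji⟩
  have hdiag := congrFun (congrFun hh.inv_mul p) p
  rwa [mul_unitri_apply hh, one_apply_eq, add_eq_left.2] at hdiag
  exact Finset.sum_eq_zero fun s hs => by rw [hupper (Finset.mem_Iio.1 hs), zero_mul]

def twist (σ : LaurentSeries K → LaurentSeries K) (ν : Fin n → ℤ)
    (h : Matrix (Fin n) (Fin n) (LaurentSeries K)) : Matrix (Fin n) (Fin n) (LaurentSeries K) :=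
  epsDiag K ν * h.map σ * epsDiag K (fun i => -ν i)

theorem twist_apply (p r : Fin n) : twist σ ν h p r = single (ν p - ν r) 1 * σ (h p r) := by
  simp only [twist, epsDiag, diagonal_mul, mul_diagonal, map_apply, eps_zpow]
  rw [mul_right_comm, single_mul_single, one_mul, sub_eq_add_neg]

theorem Unitri.twist (hσ : IsFrobenius K q σ) (hh : Unitri h) : Unitri (twist σ ν h) :=
  ⟨fun p => by rw [twist_apply, hh.1, hσ.map_one, sub_self, mul_one, single_zero_one],
    fun i j hji => by rw [twist_apply, hh.2 i j hji, hσ.map_zero, mul_zero]⟩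

theorem fnu_eq_inv_mul_twist : fnu σ ν h = h⁻¹ * twist σ ν h := by
  simp only [fnu, twist, Matrix.mul_assoc]

theorem fnu_eq_iff (hh : Unitri h) : fnu σ ν h = g ↔ h * g = twist σ ν h := by
  rw [fnu_eq_inv_mul_twist]
  constructor
  · rintro rfl
    rw [← Matrix.mul_assoc, hh.mul_inv, Matrix.one_mul]
  · intro hg
    rw [← hg, ← Matrix.mul_assoc, hh.inv_mul, Matrix.one_mul]

theorem mul_eq_twist_iff (hσ : IsFrobenius K q σ) (hh : Unitri h) (hg : Unitri g) :
    h * g = twist σ ν h ↔ ∀ p r, p < r →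
      h p r + ∑ s ∈ Finset.Iio r, h p s * g s r = single (ν p - ν r) 1 * σ (h p r) := by
  constructor
  · intro hmul p r _
    rw [← twist_apply, ← hmul, mul_unitri_apply hg]
  · intro hrow
    refine Matrix.ext fun p r => ?_
    rcases lt_trichotomy p r with hpr | rfl | hrp
    · rw [mul_unitri_apply hg, twist_apply, hrow p r hpr]
    · rw [(hh.mul hg).1, (hh.twist hσ).1]
    · rw [(hh.mul hg).2 p r hrp, (hh.twist hσ).2 p r hrp]

theorem eq_of_mul_eq_twist (hσ : IsFrobenius K q σ) (hν : StrictDominant ν) (hg : Unitri g)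
    {h₁ h₂ : Matrix (Fin n) (Fin n) (LaurentSeries K)} (hh₁ : Unitri h₁) (hh₂ : Unitri h₂)
    (e₁ : h₁ * g = twist σ ν h₁) (e₂ : h₂ * g = twist σ ν h₂) : h₁ = h₂ := by
  rw [mul_eq_twist_iff hσ hh₁ hg] at e₁
  rw [mul_eq_twist_iff hσ hh₂ hg] at e₂
  refine Matrix.ext fun p r => ?_
  induction r using WellFoundedLT.induction with
  | _ r ih =>
    rcases lt_trichotomy p r with hpr | rfl | hrp
    · have hsum : ∑ s ∈ Finset.Iio r, h₁ p s * g s r = ∑ s ∈ Finset.Iio r, h₂ p s * g s r :=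
        Finset.sum_congr rfl fun s hs => by rw [ih s (Finset.mem_Iio.1 hs)]
      exact twisted_eq_unique hσ (sub_pos.2 (hν p r hpr)) (e₁ p r hpr) (hsum ▸ e₂ p r hpr)
    · rw [hh₁.1, hh₂.1]
    · rw [hh₁.2 p r hrp, hh₂.2 p r hrp]

theorem injOn_fnu (hσ : IsFrobenius K q σ) (hν : StrictDominant ν) :
    Set.InjOn (fnu σ ν) {h : Matrix (Fin n) (Fin n) (LaurentSeries K) | Unitri h} := by
  intro h₁ hh₁ h₂ hh₂ heq
  have hg : Unitri (fnu σ ν h₁) := by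
    rw [fnu_eq_inv_mul_twist]
    exact hh₁.inv.mul (hh₁.twist hσ)
  exact eq_of_mul_eq_twist hσ hν hg hh₁ hh₂ ((fnu_eq_iff hh₁).1 rfl) ((fnu_eq_iff hh₂).1 heq.symm)

/-- `ε^{-μ} M_n(o_L) ε^{μ}` for `μ = (N, 2N, …, nN)`; `U_N` is its unitriangular part. -/
def levelSubring (K : Type*) [Field K] (n : ℕ) (N : ℤ) :
    Subring (Matrix (Fin n) (Fin n) (LaurentSeries K)) where
  carrier := {X | ∀ p r : Fin n, ((((r : ℤ) - p) * N : ℤ) : WithTop ℤ) ≤ val (X p r)}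
  zero_mem' _ _ := by simp [val]
  one_mem' p r := by
    rcases eq_or_ne p r with rfl | hpr
    · simp [val]
    · simp [one_apply_ne hpr, val]
  add_mem' hX hY p r := le_val_add (hX p r) (hY p r)
  neg_mem' hX p r := by simpa [val, orderTop_neg] using hX p r
  mul_mem' {X Y} hX hY p r := by
    rw [mul_apply]
    exact le_val_sum fun s _ => by
      simpa only [← add_mul, sub_add_sub_cancel'] using le_val_mul (hX p s) (hY s r)

theorem mem_levelSubring {X : Matrix (Fin n) (Fin n) (LaurentSeries K)} :
    X ∈ levelSubring K n N ↔
      ∀ p r : Fin n, ((((r : ℤ) - p) * N : ℤ) : WithTop ℤ) ≤ val (X p r) :=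
  Iff.rfl

theorem mem_UN_iff : g ∈ UN K n N ↔ Unitri g ∧ g ∈ levelSubring K n N := by
  rw [mem_levelSubring]
  refine ⟨fun hg => ⟨hg.1, fun p r => ?_⟩, fun hg => ⟨hg.1, fun p r _ => hg.2 p r⟩⟩
  rcases lt_trichotomy p r with hpr | rfl | hrp
  · exact hg.2 p r hpr
  · simp [hg.1.1, val]
  · simp [hg.1.2 p r hrp, val]

theorem twist_mem_UN (hσ : IsFrobenius K q σ) (hν : StrictDominant ν) (hh : h ∈ UN K n N) :
    twist σ ν h ∈ UN K n N := by
  refine ⟨hh.1.twist hσ, fun p r hpr => ?_⟩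
  rw [twist_apply, val_single_one_mul, hσ.val_eq]
  exact le_add_of_nonneg_of_le (by exact_mod_cast (sub_pos.2 (hν p r hpr)).le) (hh.2 p r hpr)

theorem mapsTo_fnu_UN (hσ : IsFrobenius K q σ) (hν : StrictDominant ν) :
    Set.MapsTo (fnu σ ν) (UN K n N) (UN K n N) := by
  intro h hh
  have htwist := mem_UN_iff.1 (twist_mem_UN hσ hν hh)
  rw [mem_UN_iff] at hh ⊢
  rw [fnu_eq_inv_mul_twist]
  exact ⟨hh.1.inv.mul htwist.1, mul_mem (hh.1.inv_mem hh.2) htwist.2⟩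

def fnuPreimageRow (q : ℕ) (ν : Fin n → ℤ) (g : Matrix (Fin n) (Fin n) (LaurentSeries K))
    (p r : Fin n) : LaurentSeries K :=
  if p < r then
    twistedSolve q (ν p - ν r)
      (∑ s ∈ (Finset.Iio r).attach, fnuPreimageRow q ν g p s * g s r)
  else if p = r then 1 else 0
termination_by (r : ℕ)
decreasing_by exact Fin.lt_def.1 (Finset.mem_Iio.1 s.2)

def fnuPreimage (q : ℕ) (ν : Fin n → ℤ) (g : Matrix (Fin n) (Fin n) (LaurentSeries K)) :
    Matrix (Fin n) (Fin n) (LaurentSeries K) :=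
  Matrix.of (fnuPreimageRow q ν g)

theorem fnuPreimage_apply_of_lt {p r : Fin n} (hpr : p < r) :
    fnuPreimage q ν g p r =
      twistedSolve q (ν p - ν r) (∑ s ∈ Finset.Iio r, fnuPreimage q ν g p s * g s r) := by
  rw [fnuPreimage, of_apply, fnuPreimageRow, if_pos hpr,
    Finset.sum_attach (Finset.Iio r) (fun s => fnuPreimageRow q ν g p s * g s r)]
  rfl

theorem unitri_fnuPreimage : Unitri (fnuPreimage q ν g) :=
  ⟨fun p => by rw [fnuPreimage, of_apply, fnuPreimageRow, if_neg (lt_irrefl p), if_pos rfl],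
    fun i j hji => by
      rw [fnuPreimage, of_apply, fnuPreimageRow, if_neg (asymm hji), if_neg hji.ne']⟩

theorem fnuPreimage_add_sum (hσ : IsFrobenius K q σ) (hν : StrictDominant ν) {p r : Fin n}
    (hpr : p < r) :
    fnuPreimage q ν g p r + ∑ s ∈ Finset.Iio r, fnuPreimage q ν g p s * g s r =
      single (ν p - ν r) 1 * σ (fnuPreimage q ν g p r) := by
  rw [fnuPreimage_apply_of_lt hpr]
  exact twistedSolve_spec hσ (sub_pos.2 (hν p r hpr)) _

theorem fnuPreimage_mul (hσ : IsFrobenius K q σ) (hν : StrictDominant ν) (hg : Unitri g) :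
    fnuPreimage q ν g * g = twist σ ν (fnuPreimage q ν g) :=
  (mul_eq_twist_iff hσ unitri_fnuPreimage hg).2 fun _ _ hpr => fnuPreimage_add_sum hσ hν hpr

theorem fnu_fnuPreimage (hσ : IsFrobenius K q σ) (hν : StrictDominant ν) (hg : Unitri g) :
    fnu σ ν (fnuPreimage q ν g) = g :=
  (fnu_eq_iff unitri_fnuPreimage).2 (fnuPreimage_mul hσ hν hg)

theorem fnuPreimage_mem_UN (hσ : IsFrobenius K q σ) (hν : StrictDominant ν)
    (hg : g ∈ UN K n N) : fnuPreimage q ν g ∈ UN K n N := by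
  rw [mem_UN_iff, mem_levelSubring] at hg ⊢
  refine ⟨unitri_fnuPreimage, fun p r => ?_⟩
  induction r using WellFoundedLT.induction with
  | _ r ih =>
    rcases lt_trichotomy p r with hpr | rfl | hrp
    · calc ((((r : ℤ) - p) * N : ℤ) : WithTop ℤ)
          ≤ val (∑ s ∈ Finset.Iio r, fnuPreimage q ν g p s * g s r) :=
            le_val_sum fun s hs => by
              simpa only [← add_mul, sub_add_sub_cancel'] using
                le_val_mul (ih s (Finset.mem_Iio.1 hs)) (hg.2 s r)
        _ ≤ val (fnuPreimage q ν g p r) :=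
            val_le_of_twisted_eq hσ (sub_pos.2 (hν p r hpr)) (fnuPreimage_add_sum hσ hν hpr)
    · simp [unitri_fnuPreimage.1, val]
    · simp [unitri_fnuPreimage.2 p r hrp, val]

theorem surjOn_fnu_UN (hσ : IsFrobenius K q σ) (hν : StrictDominant ν) :
    Set.SurjOn (fnu σ ν) (UN K n N) (UN K n N) :=
  fun g hg => ⟨fnuPreimage q ν g, fnuPreimage_mem_UN hσ hν hg, fnu_fnuPreimage hσ hν hg.1⟩

theorem bijOn_fnu_UN (hσ : IsFrobenius K q σ) (hν : StrictDominant ν) :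
    Set.BijOn (fnu σ ν) (UN K n N) (UN K n N) :=
  ⟨mapsTo_fnu_UN hσ hν, (injOn_fnu hσ hν).mono fun _ hh => hh.1, surjOn_fnu_UN hσ hν⟩

end

theorem fnu_bijective_on_UN_general (F : Type*) [Field F] [Fintype F] (n : ℕ)
    (σ : LaurentSeries (AlgebraicClosure F) → LaurentSeries (AlgebraicClosure F))
    (hσ : IsFrobenius (AlgebraicClosure F) (Fintype.card F) σ)
    (ν : Fin n → ℤ) (hν : StrictDominant ν) (N : ℤ) :
    fnu σ ν '' UN (AlgebraicClosure F) n N = UN (AlgebraicClosure F) n N ∧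
    Set.BijOn (fnu σ ν) (UN (AlgebraicClosure F) n N) (UN (AlgebraicClosure F) n N) :=
  have hbij := bijOn_fnu_UN (N := N) hσ hν
  ⟨hbij.image_eq, hbij⟩

/-- if `ν` is strictly dominant then for every `N ∈ ℤ`, `f_ν(U_N) = U_N`,
and the restriction of `f_ν` to `U_N` is a bijection from `U_N` onto `U_N`. -/
theorem fnu_bijective_on_UN (F : Type*) [Field F] [Fintype F] (n : ℕ) (hn : 2 ≤ n)
    (σ : LaurentSeries (AlgebraicClosure F) → LaurentSeries (AlgebraicClosure F))
    (hσ : IsFrobenius (AlgebraicClosure F) (Fintype.card F) σ)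
    (ν : Fin n → ℤ) (hν : StrictDominant ν) (N : ℤ) :
    fnu σ ν '' UN (AlgebraicClosure F) n N = UN (AlgebraicClosure F) n N ∧
    Set.BijOn (fnu σ ν) (UN (AlgebraicClosure F) n N) (UN (AlgebraicClosure F) n N) :=
  fnu_bijective_on_UN_general F n σ hσ ν hν N
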